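/- arXiv:1406.6160 — 2 statements merged into one kernel-verified Lean document; each statement's English description precedes it below -/
import Mathlib

section
/- Let H be a complex Hilbert space, and let p₁, p₂ be orthogonal projections on H whose ranges are ε-orthogonal for some 0 ≤ ε < 1/2. Then for every ξ ∈ H, ‖p₁ξ‖² + ‖p₂ξ‖² ≤ (1+δ(ε))² ‖Pξ‖², where P is the orthogonal projection onto the closed linear span of the ranges of p₁ and p₂, and δ: [0,1/2) → ℝ≥0 is some continuous function with δ(0) = 0 (it suffices to exhibit one such function). -/
/-!
Write `a = p₁ ξ`, `b = p₂ ξ`. Since `P` is a self-adjoint projection fixing the ranges of `p₁` and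
`p₂`, we have `‖a‖² + ‖b‖² = re ⟪P ξ, a + b⟫ ≤ ‖P ξ‖ ‖a + b‖`, while `ε`-orthogonality gives
`‖a + b‖² ≤ (1 + ε) (‖a‖² + ‖b‖²)`. Together, `‖a‖² + ‖b‖² ≤ (1 + ε) ‖P ξ‖² ≤ (1 + ε)² ‖P ξ‖²`,
so `δ t = t` works.
-/

open RCLike
open scoped InnerProductSpace

theorem ContinuousLinearMap.apply_eq_self_of_mem_range {R M : Type*} [Semiring R]
    [TopologicalSpace M] [AddCommMonoid M] [Module R M] {P : M →L[R] M} (hP : IsIdempotentElem P)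
    {y : M} (hy : y ∈ Set.range P) : P y = y := by
  obtain ⟨x, rfl⟩ := hy
  exact DFunLike.congr_fun hP x

section InnerProductSpace

variable {𝕜 E : Type*} [RCLike 𝕜] [NormedAddCommGroup E] [InnerProductSpace 𝕜 E]

theorem IsStarProjection.re_inner_apply_eq_norm_sq [CompleteSpace E] {P q : E →L[𝕜] E}
    (hP : IsSelfAdjoint P) (hq : IsStarProjection q) {ξ : E} (hPq : P (q ξ) = q ξ) :
    re ⟪P ξ, q ξ⟫_𝕜 = ‖q ξ‖ ^ 2 := by
  have hq_idem : q (q ξ) = q ξ := DFunLike.congr_fun hq.isIdempotentElem ξ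
  have hinner : ⟪P ξ, q ξ⟫_𝕜 = ⟪q ξ, q ξ⟫_𝕜 :=
    calc ⟪P ξ, q ξ⟫_𝕜 = ⟪ξ, P (q ξ)⟫_𝕜 := hP.isSymmetric ξ (q ξ)
      _ = ⟪ξ, q (q ξ)⟫_𝕜 := by rw [hPq, hq_idem]
      _ = ⟪q ξ, q ξ⟫_𝕜 := (hq.isSelfAdjoint.isSymmetric ξ (q ξ)).symm
  rw [hinner, inner_self_eq_norm_sq]

theorem norm_add_sq_le_of_norm_inner_le {a b : E} {ε : ℝ} (hε : 0 ≤ ε)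
    (hab : ‖⟪a, b⟫_𝕜‖ ≤ ε * ‖a‖ * ‖b‖) :
    ‖a + b‖ ^ 2 ≤ (1 + ε) * (‖a‖ ^ 2 + ‖b‖ ^ 2) := by
  have hre : re ⟪a, b⟫_𝕜 ≤ ε * ‖a‖ * ‖b‖ := (re_le_norm _).trans hab
  have hamgm : 2 * ‖a‖ * ‖b‖ ≤ ‖a‖ ^ 2 + ‖b‖ ^ 2 := two_mul_le_add_sq _ _
  rw [norm_add_sq (𝕜 := 𝕜)]
  nlinarith [mul_le_mul_of_nonneg_left hamgm hε]

theorem norm_sq_add_norm_sq_le_of_re_inner_eq {a b η : E} {ε : ℝ} (hε : 0 ≤ ε)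
    (hab : ‖⟪a, b⟫_𝕜‖ ≤ ε * ‖a‖ * ‖b‖) (ha : re ⟪η, a⟫_𝕜 = ‖a‖ ^ 2)
    (hb : re ⟪η, b⟫_𝕜 = ‖b‖ ^ 2) :
    ‖a‖ ^ 2 + ‖b‖ ^ 2 ≤ (1 + ε) * ‖η‖ ^ 2 := by
  set S := ‖a‖ ^ 2 + ‖b‖ ^ 2
  have hS : S ≤ ‖η‖ * ‖a + b‖ :=
    calc S = re ⟪η, a + b⟫_𝕜 := by rw [inner_add_right, map_add, ha, hb]
      _ ≤ ‖⟪η, a + b⟫_𝕜‖ := re_le_norm _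
      _ ≤ ‖η‖ * ‖a + b‖ := norm_inner_le_norm _ _
  have hsum := norm_add_sq_le_of_norm_inner_le hε hab
  rcases (show 0 ≤ S by positivity).eq_or_lt with hS0 | hS0
  · rw [← hS0]; positivity
  · have hsq : S * S ≤ (1 + ε) * ‖η‖ ^ 2 * S := by
      nlinarith [mul_self_le_mul_self hS0.le hS, mul_le_mul_of_nonneg_left hsum (sq_nonneg ‖η‖)]
    exact le_of_mul_le_mul_right hsq hS0

end InnerProductSpace

/-- There exists a continuous function `δ : [0,1/2) → ℝ≥0` with `δ 0 = 0` such that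
for any two orthogonal projections `p₁, p₂` on a complex Hilbert space whose ranges are
`ε`-orthogonal (`0 ≤ ε < 1/2`), we have
`‖p₁ ξ‖² + ‖p₂ ξ‖² ≤ (1 + δ ε)² ‖P ξ‖²`,
where `P` is the orthogonal projection onto the closed linear span of the two ranges. -/
theorem two_projections_epsilon_orthogonal :
    ∃ δ : ℝ → ℝ,
      ContinuousOn δ (Set.Ico 0 (1 / 2)) ∧ δ 0 = 0 ∧
      (∀ t ∈ Set.Ico (0 : ℝ) (1 / 2), 0 ≤ δ t) ∧
      ∀ (H : Type) [NormedAddCommGroup H] [InnerProductSpace ℂ H] [CompleteSpace H]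
        (ε : ℝ), 0 ≤ ε → ε < 1 / 2 →
        ∀ p₁ p₂ P : H →L[ℂ] H,
          IsSelfAdjoint p₁ → p₁ * p₁ = p₁ →
          IsSelfAdjoint p₂ → p₂ * p₂ = p₂ →
          IsSelfAdjoint P → P * P = P →
          (∀ ξ η : H, ‖⟪p₁ ξ, p₂ η⟫_ℂ‖ ≤ ε * ‖p₁ ξ‖ * ‖p₂ η‖) →
          (Set.range fun x : H => P x) =
            closure ↑(Submodule.span ℂ ((Set.range fun x : H => p₁ x) ∪
              (Set.range fun x : H => p₂ x))) →
          ∀ ξ : H, ‖p₁ ξ‖ ^ 2 + ‖p₂ ξ‖ ^ 2 ≤ (1 + δ ε) ^ 2 * ‖P ξ‖ ^ 2 := by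
  refine ⟨fun t => t, continuousOn_id, rfl, fun t ht => ht.1, ?_⟩
  intro H _ _ _ ε hε _ p₁ p₂ P hp₁ hp₁_idem hp₂ hp₂_idem hP hP_idem horth hrange ξ
  have hfix : ∀ y ∈ (Set.range fun x : H => p₁ x) ∪ Set.range fun x : H => p₂ x, P y = y :=
    fun y hy => P.apply_eq_self_of_mem_range hP_idem
      (hrange ▸ subset_closure (Submodule.subset_span hy))
  have h₁ := IsStarProjection.re_inner_apply_eq_norm_sq hP ⟨hp₁_idem, hp₁⟩
    (hfix _ (Or.inl ⟨ξ, rfl⟩))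
  have h₂ := IsStarProjection.re_inner_apply_eq_norm_sq hP ⟨hp₂_idem, hp₂⟩
    (hfix _ (Or.inr ⟨ξ, rfl⟩))
  calc ‖p₁ ξ‖ ^ 2 + ‖p₂ ξ‖ ^ 2 ≤ (1 + ε) * ‖P ξ‖ ^ 2 :=
        norm_sq_add_norm_sq_le_of_re_inner_eq hε (horth ξ ξ) h₁ h₂
    _ ≤ (1 + ε) ^ 2 * ‖P ξ‖ ^ 2 := by
        gcongr
        exact le_self_pow₀ (by linarith) two_ne_zero
end

section
/- Let M be a von Neumann algebra with faithful state φ and operator norm ‖·‖_∞. Suppose (xₙ)ₙ and (bₙ)ₙ are sequences in the unit ball of M, λ > 0, and ‖xₙφ − λφxₙ‖ → 0 along an ultrafilter ω, while ‖bₙ‖_φ, ‖bₙ*‖_φ → 0 along ω (here ‖a‖_φ = φ(a*a)^{1/2} and xφ = φ(·x), φx = φ(x·)). Then (‖xₙbₙ‖_φ^#)² ≤ ‖bₙ‖_φ + λ⁻¹‖xₙφ − λφxₙ‖ + λ⁻¹‖bₙ*‖_φ for each n, where ‖a‖_φ^# = φ(a*a + aa*)^{1/2}; consequently ‖xₙbₙ‖_φ^#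 → 0 along ω. -/
/-!
Let `D = xφ − λφx` and `y = b b* x*`, so that `x y = (xb)(xb)*` and `D(y) = φ(y x) − λφ(x y)`.
Hence `λ φ((xb)(xb)*) = φ(y x) − D(y)`, where `|D(y)| ≤ ‖D‖` because `‖y‖ ≤ 1`, and by the
Cauchy–Schwarz inequality for `φ`, `|φ(y x)| = |φ((b*)* (b* x* x))| ≤ ‖b*‖_φ`. The other half of
`(‖xb‖_φ^#)²` is `φ((xb)*(xb)) ≤ φ(b*b) ≤ ‖b‖_φ`, since `(xb)*(xb) ≤ b*b` and `φ(b*b) ≤ 1`.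
The convergence statement follows by squeezing.
-/

open Filter

variable {A : Type*}

/-- `‖a‖_φ = φ(a* a)^{1/2}`. -/
noncomputable def phiNorm [NormedRing A] [StarRing A] [NormedAlgebra ℂ A]
    (φ : A →L[ℂ] ℂ) (a : A) : ℝ :=
  Real.sqrt (φ (star a * a)).re

/-- `‖a‖_φ^# = φ(a* a + a a*)^{1/2}`. -/
noncomputable def phiSharpNorm [NormedRing A] [StarRing A] [NormedAlgebra ℂ A]
    (φ : A →L[ℂ] ℂ) (a : A) : ℝ :=
  Real.sqrt (φ (star a * a + a * star a)).re

/-- The functional `xφ = φ(· x)`. -/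
noncomputable def rightFunc [NormedRing A] [StarRing A] [NormedAlgebra ℂ A]
    (φ : A →L[ℂ] ℂ) (x : A) : A →L[ℂ] ℂ :=
  φ.comp ((ContinuousLinearMap.mul ℂ A).flip x)

/-- The functional `φx = φ(x ·)`. -/
noncomputable def leftFunc [NormedRing A] [StarRing A] [NormedAlgebra ℂ A]
    (φ : A →L[ℂ] ℂ) (x : A) : A →L[ℂ] ℂ :=
  φ.comp (ContinuousLinearMap.mul ℂ A x)

open scoped ComplexOrder

lemma norm_mul_le_one {R : Type*} [NonUnitalSeminormedRing R] {a b : R} (ha : ‖a‖ ≤ 1)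
    (hb : ‖b‖ ≤ 1) : ‖a * b‖ ≤ 1 := by
  simpa using norm_mul_le_of_le ha hb

lemma PositiveLinearMap.norm_apply_star_mul_le [NonUnitalCStarAlgebra A] [PartialOrder A]
    [StarOrderedRing A] (f : A →ₚ[ℂ] ℂ) (a b : A) :
    ‖f (star a * b)‖ ≤ √(f (star a * a)).re * √(f (star b * b)).re :=
  norm_inner_le_norm (𝕜 := ℂ) (f.toPreGNS a) (f.toPreGNS b)

section CStarAlgebra

variable [CStarAlgebra A] [PartialOrder A] [StarOrderedRing A]

lemma CStarAlgebra.star_mul_self_le_one {x : A} (hx : ‖x‖ ≤ 1) : star x * x ≤ 1 := by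
  rw [← CStarAlgebra.norm_le_one_iff_of_nonneg _ (star_mul_self_nonneg x),
    CStarRing.norm_star_mul_self]
  exact mul_le_one₀ hx (norm_nonneg x) hx

lemma CStarAlgebra.star_mul_mul_le_of_norm_le_one {x : A} (hx : ‖x‖ ≤ 1) (b : A) :
    star (x * b) * (x * b) ≤ star b * b := by
  simpa [star_mul, mul_assoc] using
    star_left_conjugate_le_conjugate (CStarAlgebra.star_mul_self_le_one hx) b

variable {φ : A →L[ℂ] ℂ} (hφ : ∀ a, 0 ≤ a → 0 ≤ φ a)
include hφ

lemma re_apply_le_of_le {a b : A} (hab : a ≤ b) : (φ a).re ≤ (φ b).re :=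
  (Complex.le_def.mp ((PositiveLinearMap.mk₀ φ.toLinearMap hφ).monotone' hab)).1

lemma phiSharpNorm_sq (a : A) :
    phiSharpNorm φ a ^ 2 = (φ (star a * a)).re + (φ (a * star a)).re := by
  have h₁ := re_apply_le_of_le hφ (star_mul_self_nonneg a)
  have h₂ := re_apply_le_of_le hφ (mul_star_self_nonneg a)
  rw [map_zero, Complex.zero_re] at h₁ h₂
  rw [phiSharpNorm, map_add, Complex.add_re, Real.sq_sqrt (by linarith)]

variable (hφ1 : φ 1 = 1)
include hφ1

lemma re_apply_star_mul_self_le_one {x : A} (hx : ‖x‖ ≤ 1) : (φ (star x * x)).re ≤ 1 := by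
  simpa [hφ1] using re_apply_le_of_le hφ (CStarAlgebra.star_mul_self_le_one hx)

lemma re_apply_star_mul_self_le_phiNorm {b : A} (hb : ‖b‖ ≤ 1) :
    (φ (star b * b)).re ≤ phiNorm φ b := by
  have h₀ : 0 ≤ (φ (star b * b)).re := by
    simpa using re_apply_le_of_le hφ (star_mul_self_nonneg b)
  rw [phiNorm, Real.le_sqrt h₀ h₀]
  nlinarith [re_apply_star_mul_self_le_one hφ hφ1 hb]

lemma norm_apply_star_mul_le_phiNorm (a : A) {c : A} (hc : ‖c‖ ≤ 1) :
    ‖φ (star a * c)‖ ≤ phiNorm φ a := by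
  have h₁ : √(φ (star c * c)).re ≤ 1 :=
    Real.sqrt_le_one.mpr (re_apply_star_mul_self_le_one hφ hφ1 hc)
  calc ‖φ (star a * c)‖ ≤ phiNorm φ a * √(φ (star c * c)).re :=
        (PositiveLinearMap.mk₀ φ.toLinearMap hφ).norm_apply_star_mul_le a c
    _ ≤ phiNorm φ a := mul_le_of_le_one_right (Real.sqrt_nonneg _) h₁

lemma re_apply_star_mul_mul_le_phiNorm {x b : A} (hx : ‖x‖ ≤ 1) (hb : ‖b‖ ≤ 1) :
    (φ (star (x * b) * (x * b))).re ≤ phiNorm φ b :=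
  (re_apply_le_of_le hφ (CStarAlgebra.star_mul_mul_le_of_norm_le_one hx b)).trans
    (re_apply_star_mul_self_le_phiNorm hφ hφ1 hb)

lemma mul_re_apply_mul_mul_star_le {x b : A} (hx : ‖x‖ ≤ 1) (hb : ‖b‖ ≤ 1) (lam : ℝ) :
    lam * (φ (x * b * star (x * b))).re ≤
      ‖rightFunc φ x - (lam : ℂ) • leftFunc φ x‖ + phiNorm φ (star b) := by
  set D := rightFunc φ x - (lam : ℂ) • leftFunc φ x
  set y := b * star b * star x
  have hb' : ‖star b‖ ≤ 1 := by rwa [norm_star]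
  have hx' : ‖star x‖ ≤ 1 := by rwa [norm_star]
  have hDy : D y = φ (y * x) - lam * φ (x * y) := rfl
  have hxy : x * y = x * b * star (x * b) := by simp only [y, star_mul, mul_assoc]
  have hyx : y * x = star (star b) * (star b * star x * x) := by
    simp only [y, star_star, mul_assoc]
  have hφyx : ‖φ (y * x)‖ ≤ phiNorm φ (star b) := by
    rw [hyx]
    exact norm_apply_star_mul_le_phiNorm hφ hφ1 _ (norm_mul_le_one (norm_mul_le_one hb' hx') hx)
  have hDy_le : ‖D y‖ ≤ ‖D‖ := by
    simpa using D.le_opNorm_of_le (norm_mul_le_one (norm_mul_le_one hb hb') hx')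
  calc lam * (φ (x * b * star (x * b))).re = (φ (y * x)).re - (D y).re := by
        rw [hDy, ← hxy]; simp
    _ ≤ ‖D‖ + phiNorm φ (star b) := by
        linarith [Complex.re_le_norm (φ (y * x)),
          neg_le_of_abs_le (Complex.abs_re_le_norm (D y))]

lemma phiSharpNorm_mul_sq_le {x b : A} (hx : ‖x‖ ≤ 1) (hb : ‖b‖ ≤ 1) {lam : ℝ}
    (hlam : 0 < lam) :
    phiSharpNorm φ (x * b) ^ 2 ≤ phiNorm φ b +
      lam⁻¹ * ‖rightFunc φ x - (lam : ℂ) • leftFunc φ x‖ + lam⁻¹ * phiNorm φ (star b) := by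
  have hmul_star : (φ (x * b * star (x * b))).re ≤
      lam⁻¹ * (‖rightFunc φ x - (lam : ℂ) • leftFunc φ x‖ + phiNorm φ (star b)) := by
    rw [le_inv_mul_iff₀ hlam]
    exact mul_re_apply_mul_mul_star_le hφ hφ1 hx hb lam
  rw [phiSharpNorm_sq hφ]
  linarith [re_apply_star_mul_mul_le_phiNorm hφ hφ1 hx hb]

end CStarAlgebra

theorem phi_sharp_norm_estimate_general
    [NormedRing A] [StarRing A] [CStarRing A] [NormedAlgebra ℂ A] [StarModule ℂ A]
    [CompleteSpace A]
    (ω : Ultrafilter ℕ)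
    (φ : A →L[ℂ] ℂ) (hφone : φ 1 = 1)
    (hφpos : ∀ a : A, 0 ≤ (φ (star a * a)).re ∧ (φ (star a * a)).im = 0)
    (lam : ℝ) (hlam : 0 < lam)
    (x b : ℕ → A) (hx : ∀ n, ‖x n‖ ≤ 1) (hb : ∀ n, ‖b n‖ ≤ 1)
    (hxcomm : Tendsto (fun n => ‖rightFunc φ (x n) - (lam : ℂ) • leftFunc φ (x n)‖)
      (↑ω : Filter ℕ) (nhds 0))
    (hbphi : Tendsto (fun n => phiNorm φ (b n)) (↑ω : Filter ℕ) (nhds 0))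
    (hbstarphi : Tendsto (fun n => phiNorm φ (star (b n))) (↑ω : Filter ℕ) (nhds 0)) :
    (∀ n, (phiSharpNorm φ (x n * b n)) ^ 2 ≤
        phiNorm φ (b n) + lam⁻¹ * ‖rightFunc φ (x n) - (lam : ℂ) • leftFunc φ (x n)‖ +
          lam⁻¹ * phiNorm φ (star (b n))) ∧
      Tendsto (fun n => phiSharpNorm φ (x n * b n)) (↑ω : Filter ℕ) (nhds 0) := by
  let : CStarAlgebra A := { }
  let : PartialOrder A := CStarAlgebra.spectralOrder A
  let : StarOrderedRing A := CStarAlgebra.spectralOrderedRing A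
  -- in the spectral order the nonnegative elements are exactly the `star s * s`
  have hφ : ∀ a : A, 0 ≤ a → 0 ≤ φ a := by
    intro a ha
    obtain ⟨s, rfl⟩ := CStarAlgebra.nonneg_iff_eq_star_mul_self.mp ha
    exact Complex.nonneg_iff.mpr ⟨(hφpos s).1, (hφpos s).2.symm⟩
  have key n := phiSharpNorm_mul_sq_le hφ hφone (hx n) (hb n) hlam
  refine ⟨key, squeeze_zero (fun n => Real.sqrt_nonneg _)
    (fun n => Real.le_sqrt_of_sq_le (key n)) ?_⟩
  simpa using ((hbphi.add (hxcomm.const_mul lam⁻¹)).add (hbstarphi.const_mul lam⁻¹)).sqrt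

/-- If `(xₙ)`, `(bₙ)` are sequences in the unit ball of a von Neumann algebra with faithful
state `φ`, `λ > 0`, `‖xₙφ − λφxₙ‖ → 0` along `ω` and `‖bₙ‖_φ, ‖bₙ*‖_φ → 0` along `ω`, then
`(‖xₙbₙ‖_φ^#)² ≤ ‖bₙ‖_φ + λ⁻¹‖xₙφ − λφxₙ‖ + λ⁻¹‖bₙ*‖_φ` for each `n`; consequently
`‖xₙbₙ‖_φ^# → 0` along `ω`. -/
theorem phi_sharp_norm_estimate
    [NormedRing A] [StarRing A] [CStarRing A] [NormedAlgebra ℂ A] [StarModule ℂ A]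
    [CompleteSpace A]
    (ω : Ultrafilter ℕ)
    (φ : A →L[ℂ] ℂ) (hφone : φ 1 = 1)
    (hφpos : ∀ a : A, 0 ≤ (φ (star a * a)).re ∧ (φ (star a * a)).im = 0)
    (hφfaithful : ∀ a : A, φ (star a * a) = 0 → a = 0)
    (lam : ℝ) (hlam : 0 < lam)
    (x b : ℕ → A) (hx : ∀ n, ‖x n‖ ≤ 1) (hb : ∀ n, ‖b n‖ ≤ 1)
    (hxcomm : Tendsto (fun n => ‖rightFunc φ (x n) - (lam : ℂ) • leftFunc φ (x n)‖)
      (↑ω : Filter ℕ) (nhds 0))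
    (hbphi : Tendsto (fun n => phiNorm φ (b n)) (↑ω : Filter ℕ) (nhds 0))
    (hbstarphi : Tendsto (fun n => phiNorm φ (star (b n))) (↑ω : Filter ℕ) (nhds 0)) :
    (∀ n, (phiSharpNorm φ (x n * b n)) ^ 2 ≤
        phiNorm φ (b n) + lam⁻¹ * ‖rightFunc φ (x n) - (lam : ℂ) • leftFunc φ (x n)‖ +
          lam⁻¹ * phiNorm φ (star (b n))) ∧
      Tendsto (fun n => phiSharpNorm φ (x n * b n)) (↑ω : Filter ℕ) (nhds 0) :=
  phi_sharp_norm_estimate_general ω φ hφone hφpos lam hlam x b hx hb hxcomm hbphi hbstarphi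
end
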